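/- arXiv:2310.00257 — 2 statements merged into one kernel-verified Lean document; each statement's English description precedes it below -/
import Mathlib

section
/- Let K be a block matrix (blocks indexed by pairs (i,j) of parts C_i, C_j of a partition) with zero diagonal blocks, and suppose within each off-diagonal block (C_i, C_j), K has at most c|C_i||C_j| nonzero entries. Let L be a matrix that is constant on each off-diagonal block, with value θ_{i,j} on block (C_i,C_j), and with diagonal blocks of the form γ_i·I. Then |⟨K, L⟩| ≤ √c ‖K‖_F ‖L‖_F. -/
open Matrix Finset

/-- Frobenius inner product of two square matrices indexed by `V`. -/
def frobInner {V : Type*} [Fintype V] (K L : Matrix V V ℝ) : ℝ :=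
  ∑ x : V, ∑ y : V, K x y * L x y

/-- Frobenius norm. -/
noncomputable def frobNorm {V : Type*} [Fintype V] (K : Matrix V V ℝ) : ℝ :=
  Real.sqrt (∑ x : V, ∑ y : V, (K x y) ^ 2)

theorem stmt11 {V : Type*} [Fintype V] [DecidableEq V] {k : ℕ}
    (C : Fin k → Finset V)
    (hdisj : ∀ i j : Fin k, i ≠ j → Disjoint (C i) (C j))
    (hcover : ∀ v : V, ∃ l : Fin k, v ∈ C l)
    (hne : ∀ l : Fin k, (C l).Nonempty)
    (K L : Matrix V V ℝ) (hKsymm : K.IsSymm) (hLsymm : L.IsSymm)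
    (c : ℝ) (hc0 : 0 ≤ c) (hc1 : c ≤ 1)
    -- K vanishes on diagonal blocks
    (hKdiag : ∀ l : Fin k, ∀ a ∈ C l, ∀ b ∈ C l, K a b = 0)
    -- per-block sparsity of K
    (hKsparse : ∀ i j : Fin k, i ≠ j →
      ((((C i) ×ˢ (C j)).filter fun p => K p.1 p.2 ≠ 0).card : ℝ)
        ≤ c * (C i).card * (C j).card)
    -- L is constant θ i j on each off-diagonal block
    (θ : Fin k → Fin k → ℝ) (γ : Fin k → ℝ)
    (hLoff : ∀ i j : Fin k, i ≠ j → ∀ a ∈ C i, ∀ b ∈ C j, L a b = θ i j)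
    -- diagonal blocks of L are γ_l • I
    (hLdiag : ∀ l : Fin k, ∀ a ∈ C l, ∀ b ∈ C l,
      L a b = if a = b then γ l else 0) :
    |frobInner K L| ≤ Real.sqrt c * frobNorm K * frobNorm L := by
  classical
  set a : Fin k → ℝ := fun i => ((C i).card : ℝ) with ha
  have ha0 : ∀ i, 0 ≤ a i := fun i => Nat.cast_nonneg _
  -- partition of sums
  have hpart : ∀ f : V → ℝ, ∑ x : V, f x = ∑ i : Fin k, ∑ x ∈ C i, f x := by
    intro f
    have huniv : (Finset.univ : Finset V) = Finset.univ.biUnion C := by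
      ext v
      simp only [Finset.mem_biUnion, Finset.mem_univ, true_and, true_iff]
      exact hcover v
    rw [huniv, Finset.sum_biUnion]
    intro i _ j _ hij
    exact hdisj i j hij
  set S : Fin k → Fin k → ℝ := fun i j => ∑ x ∈ C i, ∑ y ∈ C j, K x y with hS
  set Q : Fin k → Fin k → ℝ := fun i j => ∑ x ∈ C i, ∑ y ∈ C j, (K x y) ^ 2 with hQ
  have hQ0 : ∀ i j, 0 ≤ Q i j := by
    intro i j
    exact Finset.sum_nonneg fun x _ => Finset.sum_nonneg fun y _ => sq_nonneg _
  set off : Finset (Fin k × Fin k) :=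
    Finset.univ.filter (fun p : Fin k × Fin k => p.1 ≠ p.2) with hoff
  -- double sum by blocks
  have hdouble : ∀ f : V → V → ℝ,
      ∑ x : V, ∑ y : V, f x y
        = ∑ p : Fin k × Fin k, ∑ x ∈ C p.1, ∑ y ∈ C p.2, f x y := by
    intro f
    rw [hpart (fun x => ∑ y : V, f x y), Fintype.sum_prod_type]
    refine Finset.sum_congr rfl fun i _ => ?_
    calc ∑ x ∈ C i, ∑ y : V, f x y
        = ∑ x ∈ C i, ∑ j : Fin k, ∑ y ∈ C j, f x y :=
          Finset.sum_congr rfl fun x _ => hpart _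
      _ = ∑ j : Fin k, ∑ x ∈ C i, ∑ y ∈ C j, f x y := Finset.sum_comm
  -- frobInner as sum over off-diagonal blocks
  have hinner : frobInner K L = ∑ p ∈ off, θ p.1 p.2 * S p.1 p.2 := by
    rw [frobInner, hdouble (fun x y => K x y * L x y)]
    rw [← Finset.sum_filter_of_ne (p := fun p : Fin k × Fin k => p.1 ≠ p.2)]
    · refine Finset.sum_congr rfl fun p hp => ?_
      have hp' : p.1 ≠ p.2 := (Finset.mem_filter.mp hp).2
      have : ∑ x ∈ C p.1, ∑ y ∈ C p.2, K x y * L x y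
          = ∑ x ∈ C p.1, ∑ y ∈ C p.2, K x y * θ p.1 p.2 := by
        refine Finset.sum_congr rfl fun x hx => Finset.sum_congr rfl fun y hy => ?_
        rw [hLoff p.1 p.2 hp' x hx y hy]
      rw [this]
      simp only [hS, ← Finset.sum_mul]
      ring
    · intro p _ hne'
      rcases eq_or_ne p.1 p.2 with h | h
      · exact absurd (Finset.sum_eq_zero fun x hx => Finset.sum_eq_zero fun y hy => by
          rw [hKdiag p.1 x hx y (h ▸ hy)]; ring) hne'
      · exact h
  -- block Cauchy-Schwarz
  have key : ∀ i j : Fin k, i ≠ j → (S i j) ^ 2 ≤ c * a i * a j * Q i j := by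
    intro i j hij
    have hf : ∀ p : V × V, (0:ℝ) ≤ (if K p.1 p.2 = 0 then (0:ℝ) else 1) := by
      intro p; split <;> norm_num
    have hSeq : (∑ p ∈ (C i) ×ˢ (C j),
        (if K p.1 p.2 = 0 then (0:ℝ) else 1) * K p.1 p.2) = S i j := by
      rw [Finset.sum_product]
      simp only [hS]
      refine Finset.sum_congr rfl fun x _ => Finset.sum_congr rfl fun y _ => ?_
      by_cases h : K x y = 0 <;> simp [h]
    have hQeq : (∑ p ∈ (C i) ×ˢ (C j), (K p.1 p.2) ^ 2) = Q i j := by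
      rw [Finset.sum_product]
    have hNeq : (∑ p ∈ (C i) ×ˢ (C j), (if K p.1 p.2 = 0 then (0:ℝ) else 1) ^ 2)
        = (((C i ×ˢ C j).filter fun p => K p.1 p.2 ≠ 0).card : ℝ) := by
      rw [← Finset.sum_boole]
      refine Finset.sum_congr rfl fun p _ => ?_
      by_cases h : K p.1 p.2 = 0 <;> simp [h]
    have cs := Finset.sum_mul_sq_le_sq_mul_sq ((C i) ×ˢ (C j))
      (fun p => if K p.1 p.2 = 0 then (0:ℝ) else 1) (fun p => K p.1 p.2)
    simp only [hSeq, hNeq, hQeq] at cs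
    calc (S i j) ^ 2
        ≤ (((C i ×ˢ C j).filter fun p => K p.1 p.2 ≠ 0).card : ℝ) * Q i j := cs
      _ ≤ (c * a i * a j) * Q i j :=
          mul_le_mul_of_nonneg_right (hKsparse i j hij) (hQ0 i j)
  set u : Fin k × Fin k → ℝ :=
    fun p => Real.sqrt (θ p.1 p.2 ^ 2 * (a p.1 * a p.2)) with hu
  set v : Fin k × Fin k → ℝ := fun p => Real.sqrt (Q p.1 p.2) with hv
  -- termwise bound
  have hterm : ∀ p ∈ off, |θ p.1 p.2 * S p.1 p.2| ≤ Real.sqrt c * (u p * v p) := by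
    intro p hp
    have hp' : p.1 ≠ p.2 := (Finset.mem_filter.mp hp).2
    have hSb : |S p.1 p.2| ≤ Real.sqrt (c * a p.1 * a p.2 * Q p.1 p.2) :=
      Real.abs_le_sqrt (key p.1 p.2 hp')
    have hsplit : Real.sqrt (c * a p.1 * a p.2 * Q p.1 p.2)
        = Real.sqrt c * Real.sqrt (a p.1 * a p.2) * v p := by
      simp only [hv]
      rw [show c * a p.1 * a p.2 * Q p.1 p.2 = c * ((a p.1 * a p.2) * Q p.1 p.2) by ring]
      rw [Real.sqrt_mul hc0, Real.sqrt_mul (mul_nonneg (ha0 _) (ha0 _))]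
      ring
    have huval : u p = |θ p.1 p.2| * Real.sqrt (a p.1 * a p.2) := by
      simp only [hu]
      rw [Real.sqrt_mul (sq_nonneg _), Real.sqrt_sq_eq_abs]
    calc |θ p.1 p.2 * S p.1 p.2| = |θ p.1 p.2| * |S p.1 p.2| := abs_mul _ _
      _ ≤ |θ p.1 p.2| * (Real.sqrt c * Real.sqrt (a p.1 * a p.2) * v p) := by
          rw [← hsplit]
          exact mul_le_mul_of_nonneg_left hSb (abs_nonneg _)
      _ = Real.sqrt c * (u p * v p) := by rw [huval]; ring
  -- Cauchy-Schwarz over blocks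
  have hu0 : ∀ p, 0 ≤ u p := fun p => Real.sqrt_nonneg _
  have hv0 : ∀ p, 0 ≤ v p := fun p => Real.sqrt_nonneg _
  have cs2 : ∑ p ∈ off, u p * v p
      ≤ Real.sqrt (∑ p ∈ off, u p ^ 2) * Real.sqrt (∑ p ∈ off, v p ^ 2) := by
    have h := Finset.sum_mul_sq_le_sq_mul_sq off u v
    have := Real.abs_le_sqrt h
    calc ∑ p ∈ off, u p * v p ≤ |∑ p ∈ off, u p * v p| := le_abs_self _
      _ ≤ Real.sqrt ((∑ p ∈ off, u p ^ 2) * (∑ p ∈ off, v p ^ 2)) := this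
      _ = _ := Real.sqrt_mul (Finset.sum_nonneg fun p _ => sq_nonneg _) _
  -- bound sum of u² by ‖L‖²
  have hLtot : ∑ p ∈ off, u p ^ 2 ≤ ∑ x : V, ∑ y : V, (L x y) ^ 2 := by
    rw [hdouble (fun x y => (L x y) ^ 2)]
    have hsub : ∑ p ∈ off, u p ^ 2
        = ∑ p ∈ off, ∑ x ∈ C p.1, ∑ y ∈ C p.2, (L x y) ^ 2 := by
      refine Finset.sum_congr rfl fun p hp => ?_
      have hp' : p.1 ≠ p.2 := (Finset.mem_filter.mp hp).2
      have : ∑ x ∈ C p.1, ∑ y ∈ C p.2, (L x y) ^ 2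
          = ∑ x ∈ C p.1, ∑ y ∈ C p.2, θ p.1 p.2 ^ 2 := by
        refine Finset.sum_congr rfl fun x hx => Finset.sum_congr rfl fun y hy => ?_
        rw [hLoff p.1 p.2 hp' x hx y hy]
      rw [this]
      simp only [hu]
      rw [Real.sq_sqrt (by positivity)]
      simp only [Finset.sum_const, nsmul_eq_mul, ha]
      ring
    rw [hsub]
    refine Finset.sum_le_sum_of_subset_of_nonneg (Finset.filter_subset _ _) ?_
    intro p _ _
    exact Finset.sum_nonneg fun x _ => Finset.sum_nonneg fun y _ => sq_nonneg _
  -- bound sum of v² by ‖K‖²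
  have hKtot : ∑ p ∈ off, v p ^ 2 ≤ ∑ x : V, ∑ y : V, (K x y) ^ 2 := by
    rw [hdouble (fun x y => (K x y) ^ 2)]
    have hsub : ∑ p ∈ off, v p ^ 2 = ∑ p ∈ off, Q p.1 p.2 := by
      refine Finset.sum_congr rfl fun p _ => ?_
      simp only [hv]
      rw [Real.sq_sqrt (hQ0 _ _)]
    rw [hsub]
    exact Finset.sum_le_sum_of_subset_of_nonneg (Finset.filter_subset _ _)
      (fun p _ _ => hQ0 _ _)
  -- assemble
  rw [hinner]
  calc |∑ p ∈ off, θ p.1 p.2 * S p.1 p.2|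
      ≤ ∑ p ∈ off, |θ p.1 p.2 * S p.1 p.2| := Finset.abs_sum_le_sum_abs _ _
    _ ≤ ∑ p ∈ off, Real.sqrt c * (u p * v p) := Finset.sum_le_sum hterm
    _ = Real.sqrt c * ∑ p ∈ off, u p * v p := by rw [Finset.mul_sum]
    _ ≤ Real.sqrt c *
        (Real.sqrt (∑ p ∈ off, u p ^ 2) * Real.sqrt (∑ p ∈ off, v p ^ 2)) :=
          mul_le_mul_of_nonneg_left cs2 (Real.sqrt_nonneg _)
    _ ≤ Real.sqrt c * (frobNorm L * frobNorm K) := by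
        refine mul_le_mul_of_nonneg_left ?_ (Real.sqrt_nonneg _)
        refine mul_le_mul ?_ ?_ (Real.sqrt_nonneg _) ?_
        · exact Real.sqrt_le_sqrt hLtot
        · exact Real.sqrt_le_sqrt hKtot
        · exact Real.sqrt_nonneg _
    _ = Real.sqrt c * frobNorm K * frobNorm L := by ring
end

section
/- Let G be a graph with a clique cover C_1,...,C_k, and let Z* be the block matrix with diagonal blocks I/|C_l| and off-diagonal (C_i,C_j) blocks all-ones/(|C_i||C_j|). Let K̃ denote the orthogonal projection of Z* onto the span of the matrices E_{ij} for edges (i,j) between distinct cliques (i.e., zeroing all entries except those at inter-clique edges). If G satisfies the c-SCC property, then ‖K̃‖_F ≤ √c · Σ_{l=1}^k 1/|C_l|. -/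
open Matrix Finset

/-- The block matrix `Z*`: diagonal blocks `I/|C_l|`, off-diagonal `(C_i,C_j)` blocks
all-ones scaled by `1/(|C_i||C_j|)`.  `π` assigns each vertex to its part. -/
noncomputable def Zstar {V : Type*} [Fintype V] [DecidableEq V] {k : ℕ}
    (C : Fin k → Finset V) (π : V → Fin k) : Matrix V V ℝ :=
  Matrix.of fun a b =>
    if π a = π b then (if a = b then ((C (π a)).card : ℝ)⁻¹ else 0)
    else (((C (π a)).card : ℝ) * ((C (π b)).card : ℝ))⁻¹

theorem stmt16 {V : Type*} [Fintype V] [DecidableEq V] {k : ℕ}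
    (G : SimpleGraph V) [DecidableRel G.Adj]
    (C : Fin k → Finset V)
    (hdisj : ∀ i j : Fin k, i ≠ j → Disjoint (C i) (C j))
    (hne : ∀ l : Fin k, (C l).Nonempty)
    (π : V → Fin k) (hπ : ∀ v : V, v ∈ C (π v))
    (hclique : ∀ l : Fin k, G.IsClique (C l : Set V))
    (c : ℝ) (hc0 : 0 ≤ c)
    (hscc : ∀ v : V, ∀ l : Fin k, v ∉ C l →
      (((C l).filter (fun w => G.Adj v w)).card : ℝ) ≤ c * (C l).card) :
    frobNorm
      (Matrix.of fun a b =>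
        if G.Adj a b ∧ π a ≠ π b then Zstar C π a b else 0)
      ≤ Real.sqrt c * ∑ l : Fin k, (((C l).card : ℝ))⁻¹ := by
  classical
  have hmem : ∀ v (l : Fin k), v ∈ C l ↔ π v = l := by
    intro v l
    constructor
    · intro hv
      by_contra h
      exact Finset.disjoint_left.mp (hdisj (π v) l h) (hπ v) hv
    · rintro rfl; exact hπ v
  have hpos : ∀ l : Fin k, (0:ℝ) < (C l).card := fun l =>
    Nat.cast_pos.mpr (Finset.card_pos.mpr (hne l))
  set S := ∑ l : Fin k, (((C l).card : ℝ))⁻¹ with hS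
  have hSnn : 0 ≤ S := Finset.sum_nonneg fun l _ => by positivity
  have hfib : ∀ l : Fin k, Finset.univ.filter (fun v => π v = l) = C l := by
    intro l; ext v; simp [hmem v l]
  have hsq : ∑ a : V, (((C (π a)).card : ℝ)⁻¹)^2 = S := by
    rw [← Finset.sum_fiberwise Finset.univ π (fun a => (((C (π a)).card : ℝ)⁻¹)^2)]
    refine Finset.sum_congr rfl fun l _ => ?_
    rw [hfib l]
    have : ∀ a ∈ C l, (((C (π a)).card : ℝ)⁻¹)^2 = (((C l).card : ℝ)⁻¹)^2 := by
      intro a ha; rw [(hmem a l).mp ha]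
    rw [Finset.sum_congr rfl this, Finset.sum_const, nsmul_eq_mul]
    have := (hpos l).ne'
    field_simp
  have inner : ∀ a : V,
      (∑ y : V, (if G.Adj a y ∧ π a ≠ π y then Zstar C π a y else 0)^2)
      ≤ c * (((C (π a)).card : ℝ)⁻¹)^2 * S := by
    intro a
    rw [← Finset.sum_fiberwise Finset.univ π
      (fun y => (if G.Adj a y ∧ π a ≠ π y then Zstar C π a y else 0)^2)]
    have hterm : ∀ l : Fin k,
        (∑ y ∈ Finset.univ.filter (fun y => π y = l),
          (if G.Adj a y ∧ π a ≠ π y then Zstar C π a y else 0)^2)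
        ≤ c * (((C (π a)).card : ℝ)⁻¹)^2 * (((C l).card : ℝ))⁻¹ := by
      intro l
      by_cases hl : π a = l
      · have : ∀ y ∈ Finset.univ.filter (fun y => π y = l),
            (if G.Adj a y ∧ π a ≠ π y then Zstar C π a y else 0)^2 = 0 := by
          intro y hy
          simp only [Finset.mem_filter] at hy
          have : ¬ (G.Adj a y ∧ π a ≠ π y) := by
            rintro ⟨-, hne'⟩; exact hne' (hl.trans hy.2.symm)
          simp [this]
        rw [Finset.sum_congr rfl this, Finset.sum_const, smul_zero]
        have := (hpos l).le
        positivity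
      · have ha : a ∉ C l := fun h => hl ((hmem a l).mp h)
        have hval : ∀ y ∈ Finset.univ.filter (fun y => π y = l),
            (if G.Adj a y ∧ π a ≠ π y then Zstar C π a y else 0)^2
            = (if G.Adj a y then ((((C (π a)).card : ℝ) * ((C l).card : ℝ))⁻¹)^2 else 0) := by
          intro y hy
          simp only [Finset.mem_filter] at hy
          have hne' : π a ≠ π y := by rw [hy.2]; exact hl
          by_cases hadj : G.Adj a y
          · rw [if_pos ⟨hadj, hne'⟩]
            simp only [Zstar, Matrix.of_apply, hy.2, if_neg hl, if_pos hadj]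
          · simp [hadj]
        rw [Finset.sum_congr rfl hval, ← Finset.sum_filter, Finset.sum_const,
          nsmul_eq_mul, Finset.filter_filter]
        have hcount : ((Finset.univ.filter (fun y => π y = l ∧ G.Adj a y)).card : ℝ)
            ≤ c * ((C l).card : ℝ) := by
          have heq : Finset.univ.filter (fun y => π y = l ∧ G.Adj a y)
              = (C l).filter (fun w => G.Adj a w) := by
            ext y; simp [hmem y l, and_comm]
          rw [heq]; exact hscc a l ha
        have hnn : (0:ℝ) ≤ ((((C (π a)).card : ℝ) * ((C l).card : ℝ))⁻¹)^2 := by positivity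
        calc ((Finset.univ.filter (fun y => π y = l ∧ G.Adj a y)).card : ℝ)
              * ((((C (π a)).card : ℝ) * ((C l).card : ℝ))⁻¹)^2
            ≤ (c * ((C l).card : ℝ)) * ((((C (π a)).card : ℝ) * ((C l).card : ℝ))⁻¹)^2 :=
              mul_le_mul_of_nonneg_right hcount hnn
          _ = c * (((C (π a)).card : ℝ)⁻¹)^2 * (((C l).card : ℝ))⁻¹ := by
              have h1 := (hpos (π a)).ne'
              have h2 := (hpos l).ne'
              field_simp
    calc (∑ l : Fin k, ∑ y ∈ Finset.univ.filter (fun y => π y = l),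
            (if G.Adj a y ∧ π a ≠ π y then Zstar C π a y else 0)^2)
        ≤ ∑ l : Fin k, c * (((C (π a)).card : ℝ)⁻¹)^2 * (((C l).card : ℝ))⁻¹ :=
          Finset.sum_le_sum fun l _ => hterm l
      _ = c * (((C (π a)).card : ℝ)⁻¹)^2 * S := by rw [← Finset.mul_sum]
  have key : (∑ x : V, ∑ y : V,
      ((Matrix.of fun a b => if G.Adj a b ∧ π a ≠ π b then Zstar C π a b else 0) x y)^2)
      ≤ c * S * S := by
    calc (∑ x : V, ∑ y : V,
          ((Matrix.of fun a b => if G.Adj a b ∧ π a ≠ π b then Zstar C π a b else 0) x y)^2)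
        = ∑ x : V, ∑ y : V, (if G.Adj x y ∧ π x ≠ π y then Zstar C π x y else 0)^2 := rfl
      _ ≤ ∑ x : V, c * (((C (π x)).card : ℝ)⁻¹)^2 * S :=
          Finset.sum_le_sum fun x _ => inner x
      _ = c * S * ∑ x : V, (((C (π x)).card : ℝ)⁻¹)^2 := by
          rw [← Finset.sum_mul, ← Finset.mul_sum]; ring
      _ = c * S * S := by rw [hsq]
  unfold frobNorm
  have h := Real.sqrt_le_sqrt key
  refine h.trans_eq ?_
  rw [show c * S * S = c * S^2 by ring, Real.sqrt_mul hc0, Real.sqrt_sq hSnn]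
end
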